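/- Let C ⊆ ℝ^{n+1} be a nonempty compact convex set and α ≥ 0. If (0_n, 1) belongs to the closure of the convex conical hull of C + α·B_{n+1} (where B_{n+1} is the closed unit Euclidean ball), then for every ε > 0, (0_n, 1) belongs to the (not necessarily closed) convex conical hull of C + (α + ε)·B_{n+1}. -/

import Mathlib

open Finset Pointwise

noncomputable def enorm' {k : ℕ} (v : Fin k → ℝ) : ℝ := Real.sqrt (∑ i, v i ^ 2)

def coneHull {k : ℕ} (X : Set (Fin k → ℝ)) : Set (Fin k → ℝ) :=
  {y | y = 0 ∨ ∃ t : ℝ, 0 ≤ t ∧ ∃ c ∈ convexHull ℝ X, y = t • c}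

def dualCone {m : ℕ} (K : Set (Fin m → ℝ)) : Set (Fin m → ℝ) :=
  {a | ∀ x ∈ K, 0 ≤ ∑ i, a i * x i}

def Feas {m n : ℕ} (K : Set (Fin m → ℝ)) (Abar : Fin m → Fin n → ℝ) (bbar : Fin m → ℝ)
    (r : Fin m → ℝ) : Set (Fin n → ℝ) :=
  {x | ∀ (a : Fin m → Fin n → ℝ) (b : Fin m → ℝ),
      (∀ i, enorm' (Fin.snoc (a i - Abar i) (b i - bbar i)) ≤ r i) →
      (fun i => (∑ j, a i j * x j) + b i) ∈ -K}

def Adm {m n : ℕ} (K : Set (Fin m → ℝ)) (Abar : Fin m → Fin n → ℝ) (bbar : Fin m → ℝ) :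
    Set (Fin m → ℝ) :=
  {r | (∀ i, 0 ≤ r i) ∧ (Feas K Abar bbar r).Nonempty}

noncomputable def rrf {m n : ℕ} (K : Set (Fin m → ℝ)) (Abar : Fin m → Fin n → ℝ)
    (bbar : Fin m → ℝ) : ℝ :=
  sSup {α : ℝ | 0 ≤ α ∧ (fun _ => α) ∈ Adm K Abar bbar}

def Epi {m n : ℕ} (Abar : Fin m → Fin n → ℝ) (bbar : Fin m → ℝ) (B : Set (Fin m → ℝ)) :
    Set (Fin (n + 1) → ℝ) :=
  {y | ∃ l ∈ B, ∃ w : ℝ, 0 ≤ w ∧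
    y = Fin.snoc (fun j => ∑ i, l i * Abar i j) (-(∑ i, l i * bbar i) + w)}

noncomputable def edist0 {m n : ℕ} (Abar : Fin m → Fin n → ℝ) (bbar : Fin m → ℝ)
    (B : Set (Fin m → ℝ)) : ℝ :=
  sInf {t : ℝ | ∃ y ∈ Epi Abar bbar B, t = enorm' y}

def IsCompactBase {m : ℕ} (C B : Set (Fin m → ℝ)) : Prop :=
  IsCompact B ∧ Convex ℝ B ∧ B ⊆ C ∧ (0 : Fin m → ℝ) ∉ B ∧
    C = {y | ∃ t : ℝ, 0 ≤ t ∧ ∃ b ∈ B, y = t • b}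

def IsClosedConvexCone {m : ℕ} (K : Set (Fin m → ℝ)) : Prop :=
  IsClosed K ∧ Convex ℝ K ∧ ∀ t : ℝ, 0 ≤ t → ∀ x ∈ K, t • x ∈ K

noncomputable def c1 {m : ℕ} (n : ℕ) (B : Set (Fin m → ℝ)) : ℝ :=
  (sSup {t : ℝ | ∃ l ∈ B, ∃ u : Fin m → (Fin (n + 1) → ℝ),
    (∀ i, enorm' (u i) ≤ 1) ∧ t = enorm' (∑ i, l i • u i)})⁻¹

noncomputable def c2 {m : ℕ} (B : Set (Fin m → ℝ)) : ℝ :=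
  (sInf {t : ℝ | ∃ l ∈ B, t = ∑ i, |l i|})⁻¹

/-!
Pick `t • c` in the cone over `D` within `η` of `x`. Since `p x > 0` and `D` is `p`-bounded, `t` is
bounded below, so `x = t • (c + t⁻¹ • (x - t • c))` with `p (t⁻¹ • (x - t • c)) ≤ η / t ≤ ε` once
`η` is small. For `D = C + α • B` with `B` the Euclidean unit ball, the extra `ε`-ball merges with
`α • B` into `(α + ε) • B` by convexity of `B`.
-/

namespace Seminorm

variable {E : Type*} [AddCommGroup E] [Module ℝ E]

theorem bddAbove_image_add_closedBall (p : Seminorm ℝ E) {C : Set E} (hC : BddAbove (p '' C))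
    (r : ℝ) :
    BddAbove (p '' (C + p.closedBall 0 r)) := by
  obtain ⟨R, hR⟩ := hC
  refine ⟨R + r, ?_⟩
  rintro _ ⟨_, ⟨c, hc, b, hb, rfl⟩, rfl⟩
  exact (map_add_le_add p c b).trans
    (add_le_add (hR ⟨c, hc, rfl⟩) (p.mem_closedBall_zero.mp hb))

variable [TopologicalSpace E] [IsTopologicalAddGroup E]

theorem exists_eq_smul_mem_add_closedBall_of_mem_closure_cone (p : Seminorm ℝ E)
    (hp : Continuous p) {D : Set E} (hD : BddAbove (p '' D)) {x : E} (hx : 0 < p x)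
    (h : x ∈ closure {y | y = 0 ∨ ∃ t : ℝ, 0 ≤ t ∧ ∃ c ∈ D, y = t • c}) {ε : ℝ} (hε : 0 < ε) :
    ∃ t : ℝ, 0 ≤ t ∧ ∃ c ∈ D + p.closedBall 0 ε, x = t • c := by
  obtain ⟨M₀, hM₀⟩ := hD
  set M := max M₀ 1
  have hM : ∀ c ∈ D, p c ≤ M := fun c hc => (hM₀ ⟨c, hc, rfl⟩).trans (le_max_left _ _)
  have hM0 : 0 < M := one_pos.trans_le (le_max_right _ _)
  set η := min (p x / 2) (ε * p x / (2 * M))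
  have hη : 0 < η := by positivity
  obtain ⟨y, hxy, hy⟩ : ∃ y, p (x - y) < η ∧ (y = 0 ∨ ∃ t : ℝ, 0 ≤ t ∧ ∃ c ∈ D, y = t • c) :=
    mem_closure_iff.mp h {y | p (x - y) < η}
      (isOpen_lt (hp.comp (continuous_const.sub continuous_id)) continuous_const)
      (show p (x - x) < η by rwa [sub_self, map_zero])
  have hpy : p x - η < p y := by
    have := map_add_le_add p y (x - y)
    rw [add_sub_cancel] at this
    linarith
  rcases hy with rfl | ⟨t, ht, c, hc, rfl⟩
  · linarith [map_zero p, min_le_left (p x / 2) (ε * p x / (2 * M))]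
  have htM : p x / 2 ≤ t * M := by
    have : p (t • c) ≤ t * M := by
      rw [map_smul_eq_mul, Real.norm_of_nonneg ht]
      exact mul_le_mul_of_nonneg_left (hM c hc) ht
    linarith [min_le_left (p x / 2) (ε * p x / (2 * M))]
  have ht0 : 0 < t := pos_of_mul_pos_left ((half_pos hx).trans_le htM) hM0.le
  have hηt : η ≤ ε * t :=
    calc η ≤ ε * p x / (2 * M) := min_le_right _ _
      _ = ε * (p x / 2) / M := by ring
      _ ≤ ε * (t * M) / M := by gcongr
      _ = ε * t := by field_simp
  refine ⟨t, ht, c + t⁻¹ • (x - t • c), Set.add_mem_add hc ?_, ?_⟩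
  · rw [mem_closedBall_zero, map_smul_eq_mul, norm_inv, Real.norm_of_nonneg ht,
      inv_mul_le_iff₀ ht0, mul_comm]
    exact hxy.le.trans hηt
  · rw [smul_add, smul_inv_smul₀ ht0.ne']
    abel

end Seminorm

theorem coneHull_eq_of_convex {k : ℕ} {X : Set (Fin k → ℝ)} (hX : Convex ℝ X) :
    coneHull X = {y | y = 0 ∨ ∃ t : ℝ, 0 ≤ t ∧ ∃ c ∈ X, y = t • c} := by
  rw [coneHull, hX.convexHull_eq]

noncomputable def euclideanSeminorm (k : ℕ) : Seminorm ℝ (Fin k → ℝ) :=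
  (normSeminorm ℝ (EuclideanSpace ℝ (Fin k))).comp
    (WithLp.linearEquiv 2 ℝ (Fin k → ℝ)).symm.toLinearMap

theorem euclideanSeminorm_apply {k : ℕ} (v : Fin k → ℝ) : euclideanSeminorm k v = enorm' v := by
  simp [euclideanSeminorm, enorm', EuclideanSpace.norm_eq]

theorem continuous_euclideanSeminorm (k : ℕ) : Continuous (euclideanSeminorm k) :=
  show Continuous fun v => ‖WithLp.toLp 2 v‖ from (PiLp.continuous_toLp 2 _).norm

theorem setOf_enorm'_le_one_eq_closedBall (k : ℕ) :
    {b : Fin k → ℝ | enorm' b ≤ 1} = (euclideanSeminorm k).closedBall 0 1 := by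
  ext b
  rw [Seminorm.mem_closedBall_zero, euclideanSeminorm_apply, Set.mem_ofPred_eq]

theorem euclideanSeminorm_single_last (n : ℕ) :
    euclideanSeminorm (n + 1) (Pi.single (Fin.last n) 1) = 1 := by
  rw [euclideanSeminorm_apply, enorm', Finset.sum_eq_single (Fin.last n)] <;> simp_all

theorem statement0_general {n : ℕ} (C : Set (Fin (n + 1) → ℝ))
    (hcpt : IsCompact C) (hconv : Convex ℝ C) (α : ℝ) (hα : 0 ≤ α)
    (h : (Pi.single (Fin.last n) 1 : Fin (n + 1) → ℝ) ∈
      closure (coneHull (C + α • {b : Fin (n + 1) → ℝ | enorm' b ≤ 1}))) :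
    ∀ ε > (0 : ℝ),
      (Pi.single (Fin.last n) 1 : Fin (n + 1) → ℝ) ∈
        coneHull (C + (α + ε) • {b : Fin (n + 1) → ℝ | enorm' b ≤ 1}) := by
  intro ε hε
  set p := euclideanSeminorm (n + 1)
  rw [setOf_enorm'_le_one_eq_closedBall] at h ⊢
  have hD : Convex ℝ (C + α • p.closedBall 0 1) := hconv.add ((p.convex_closedBall 0 1).smul α)
  have hDbdd : BddAbove (p '' (C + α • p.closedBall 0 1)) := by
    refine (p.bddAbove_image_add_closedBall (hcpt.bddAbove_image
      (continuous_euclideanSeminorm _).continuousOn) (‖α‖ * 1)).mono (Set.image_mono ?_)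
    exact Set.add_subset_add_left Seminorm.smul_closedBall_subset
  have hsum : C + α • p.closedBall 0 1 + p.closedBall 0 ε = C + (α + ε) • p.closedBall 0 1 := by
    rw [(p.convex_closedBall 0 1).add_smul hα hε.le, ← add_assoc,
      Seminorm.smul_closedBall_zero (k := ε) (by simpa using hε.ne'), Real.norm_of_nonneg hε.le,
      mul_one]
  rw [coneHull_eq_of_convex hD] at h
  obtain ⟨t, ht, c, hc, he⟩ := p.exists_eq_smul_mem_add_closedBall_of_mem_closure_cone
    (continuous_euclideanSeminorm _) hDbdd (by rw [euclideanSeminorm_single_last]; exact one_pos)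
    h hε
  exact Or.inr ⟨t, ht, c, subset_convexHull ℝ _ (hsum ▸ hc), he⟩

/-- extended accessibility lemma for conic hulls of enlarged compact convex sets. -/
theorem statement0 {n : ℕ} (C : Set (Fin (n + 1) → ℝ)) (hne : C.Nonempty)
    (hcpt : IsCompact C) (hconv : Convex ℝ C) (α : ℝ) (hα : 0 ≤ α)
    (h : (Pi.single (Fin.last n) 1 : Fin (n + 1) → ℝ) ∈
      closure (coneHull (C + α • {b : Fin (n + 1) → ℝ | enorm' b ≤ 1}))) :
    ∀ ε > (0 : ℝ),
      (Pi.single (Fin.last n) 1 : Fin (n + 1) → ℝ) ∈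
        coneHull (C + (α + ε) • {b : Fin (n + 1) → ℝ | enorm' b ≤ 1}) :=
  statement0_general C hcpt hconv α hα h
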